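/- Assume in addition that A is continuously differentiable. There exists a constant C > 0, depending only on n, α, κ and A, and independent of ε_1, …, ε_n and of the choice of mesh, such that for any mesh points 0 = x_0 < x_1 < … < x_N = 1, each i, 1 ≤ i ≤ n, and each j, 1 ≤ j ≤ N−1: ε_i · |δ²w^l_i(x_j) − (w^l_i)''(x_j)| ≤ C · B^l_n(x_{j−1}). -/

import Mathlib

noncomputable def Bl (α e x : ℝ) : ℝ := Real.exp (-x * Real.sqrt (α / e))

noncomputable def Lop (n : ℕ) (ε : ℕ → ℝ) (A : ℝ → ℕ → ℕ → ℝ)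
    (ψ : ℝ → ℕ → ℝ) (x : ℝ) (i : ℕ) : ℝ :=
  -(ε i) * iteratedDeriv 2 (fun t => ψ t i) x + ∑ j ∈ Finset.Icc 1 n, A x i j * ψ x j

noncomputable def d2f (x : ℕ → ℝ) (g : ℝ → ℝ) (j : ℕ) : ℝ :=
  ((g (x (j+1)) - g (x j)) / (x (j+1) - x j) - (g (x j) - g (x (j-1))) / (x j - x (j-1)))
    / (((x j - x (j-1)) + (x (j+1) - x j)) / 2)

/-!
The barrier `κ * Bl α (ε n)` is a supersolution of `L`: its `i`-th component is mapped to
`κ * Bl α (ε n) * (∑ j, a i j - ε i * α / ε n)`, and `ε i * α / ε n ≤ α` lies below every row sum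
of `A`. Since `A` has nonpositive off-diagonal entries and positive row sums, `L` satisfies a
maximum principle, and comparing `w` with `± κ * Bl α (ε n)` gives `|w k x| ≤ κ * Bl α (ε n) x`.
Reading `L w = 0` as `ε i * w i'' = ∑ j, a i j * w j` then bounds `ε i * |w i''|` by
`M * κ * Bl α (ε n)`, where `M` bounds the row sums of `|A|` on `[0, 1]`. Finally, the mean
value theorem, applied to `w i` on both mesh intervals and then to `w i'`, bounds `δ² w i (x j)`
by twice a value of `w i''` on `(x (j - 1), x (j + 1))`, where `Bl` is at most its value at
`x (j - 1)`.
-/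

open Set Topology

-- A local minimum with `f'' < 0` would also be a local maximum, so `f` would be locally constant.
theorem IsLocalMin.deriv_deriv_nonneg {f : ℝ → ℝ} {x : ℝ} (h : IsLocalMin f x)
    (hc : ContinuousAt f x) : 0 ≤ deriv (deriv f) x := by
  by_contra! hneg
  have hmax := isLocalMax_of_deriv_deriv_neg hneg h.deriv_eq_zero hc
  have hconst : f =ᶠ[𝓝 x] fun _ => f x := (h.and hmax).mono fun _ hy => le_antisymm hy.2 hy.1
  have := hconst.deriv.deriv_eq
  simp only [deriv_const', deriv_const] at this
  exact hneg.ne this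

theorem iteratedDeriv_two_eq_deriv_deriv (f : ℝ → ℝ) : iteratedDeriv 2 f = deriv (deriv f) := by
  rw [iteratedDeriv_succ, iteratedDeriv_one]

theorem exists_abs_divided_difference_le {g : ℝ → ℝ} (hg : ContDiff ℝ 2 g) {a b c : ℝ}
    (hab : a < b) (hbc : b < c) :
    ∃ η ∈ Ioo a c, |((g c - g b) / (c - b) - (g b - g a) / (b - a)) / (((b - a) + (c - b)) / 2)|
      ≤ 2 * |iteratedDeriv 2 g η| := by
  have hg₁ : Differentiable ℝ g := hg.differentiable two_ne_zero
  have hg₂ : Differentiable ℝ (deriv g) :=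
    (hg.iterate_deriv' 1 1).differentiable one_ne_zero
  obtain ⟨ξ₁, hξ₁, hslope₁⟩ := exists_deriv_eq_slope g hab hg₁.continuous.continuousOn
    hg₁.differentiableOn
  obtain ⟨ξ₂, hξ₂, hslope₂⟩ := exists_deriv_eq_slope g hbc hg₁.continuous.continuousOn
    hg₁.differentiableOn
  have hξ : ξ₁ < ξ₂ := hξ₁.2.trans hξ₂.1
  obtain ⟨η, hη, hslope⟩ := exists_deriv_eq_slope (deriv g) hξ hg₂.continuous.continuousOn
    hg₂.differentiableOn
  refine ⟨η, ⟨hξ₁.1.trans hη.1, hη.2.trans hξ₂.2⟩, ?_⟩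
  have hnum : (g c - g b) / (c - b) - (g b - g a) / (b - a) = deriv (deriv g) η * (ξ₂ - ξ₁) := by
    rw [← hslope₁, ← hslope₂, hslope]
    field_simp [sub_ne_zero.2 hξ.ne']
  rw [iteratedDeriv_two_eq_deriv_deriv, hnum, abs_div, abs_mul, abs_of_pos (sub_pos.2 hξ),
    abs_of_pos (show 0 < ((b - a) + (c - b)) / 2 by linarith), mul_div_assoc, mul_comm 2]
  gcongr
  rw [div_le_iff₀ (by linarith)]
  linarith [hξ₁.1, hξ₂.2]

theorem mul_abs_d2f_sub_iteratedDeriv_two_le {g : ℝ → ℝ} (hg : ContDiff ℝ 2 g) {x : ℕ → ℝ}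
    {j : ℕ} (h₁ : x (j - 1) < x j) (h₂ : x j < x (j + 1)) {c B : ℝ} (hc : 0 ≤ c)
    (hB : ∀ y ∈ Ioo (x (j - 1)) (x (j + 1)), c * |iteratedDeriv 2 g y| ≤ B) :
    c * |d2f x g j - iteratedDeriv 2 g (x j)| ≤ 3 * B := by
  obtain ⟨η, hη, hd2f⟩ : ∃ η ∈ Ioo (x (j - 1)) (x (j + 1)),
      |d2f x g j| ≤ 2 * |iteratedDeriv 2 g η| := exists_abs_divided_difference_le hg h₁ h₂
  calc c * |d2f x g j - iteratedDeriv 2 g (x j)|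
      ≤ c * |d2f x g j| + c * |iteratedDeriv 2 g (x j)| := by
        rw [← mul_add]
        exact mul_le_mul_of_nonneg_left (abs_sub _ _) hc
    _ ≤ 2 * (c * |iteratedDeriv 2 g η|) + c * |iteratedDeriv 2 g (x j)| := by
        have := mul_le_mul_of_nonneg_left hd2f hc
        linarith
    _ ≤ 2 * B + B := by
        gcongr
        exacts [hB η hη, hB (x j) ⟨h₁, h₂⟩]
    _ = 3 * B := by ring

theorem mesh_bounds {x : ℕ → ℝ} {N j : ℕ} (hx₀ : x 0 = 0) (hxN : x N = 1)
    (hx : ∀ k, k < N → x k < x (k + 1)) (hj₁ : 1 ≤ j) (hjN : j ≤ N - 1) :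
    0 ≤ x (j - 1) ∧ x (j - 1) < x j ∧ x j < x (j + 1) ∧ x (j + 1) ≤ 1 := by
  have hmono : StrictMonoOn x (Iic N) := strictMonoOn_Iic_of_lt_succ hx
  have hmem : ∀ k, k ≤ N → k ∈ Iic N := fun _ h => h
  rw [← hx₀, ← hxN]
  refine ⟨hmono.monotoneOn (hmem 0 (by omega)) (hmem _ (by omega)) (Nat.zero_le _),
    hmono (hmem _ (by omega)) (hmem _ (by omega)) (by omega),
    hmono (hmem _ (by omega)) (hmem _ (by omega)) (by omega),
    hmono.monotoneOn (hmem _ (by omega)) (hmem _ le_rfl) (by omega)⟩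

theorem IsCompact.exists_isMinOn_finset {X ι : Type*} [TopologicalSpace X] {K : Set X}
    (hK : IsCompact K) (hK₀ : K.Nonempty) {s : Finset ι} (hs : s.Nonempty) {f : X → ι → ℝ}
    (hf : ∀ i ∈ s, ContinuousOn (fun t => f t i) K) :
    ∃ z ∈ K, ∃ i ∈ s, ∀ y ∈ K, ∀ k ∈ s, f z i ≤ f y k := by
  have : Nonempty X := ⟨hK₀.some⟩
  choose! z hzK hzmin using fun i hi => hK.exists_isMinOn hK₀ (hf i hi)
  obtain ⟨i, hi, himin⟩ := s.exists_min_image (fun i => f (z i) i) hs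
  exact ⟨z i, hzK i hi, i, hi, fun y hy k hk => (himin k hk).trans (hzmin k hk hy)⟩

theorem IsCompact.exists_pos_bound_sum_abs {K : Set ℝ} (hK : IsCompact K) {n : ℕ}
    {A : ℝ → ℕ → ℕ → ℝ}
    (hA : ∀ i j, 1 ≤ i → i ≤ n → 1 ≤ j → j ≤ n → ContinuousOn (fun x => A x i j) K) :
    ∃ M > 0, ∀ x ∈ K, ∀ i, 1 ≤ i → i ≤ n → ∑ j ∈ Finset.Icc 1 n, |A x i j| ≤ M := by
  have hcont : ContinuousOn (fun x => ∑ i ∈ Finset.Icc 1 n, ∑ j ∈ Finset.Icc 1 n, |A x i j|) K :=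
    continuousOn_finsetSum _ fun i hi => continuousOn_finsetSum _ fun j hj =>
      (hA i j (Finset.mem_Icc.1 hi).1 (Finset.mem_Icc.1 hi).2 (Finset.mem_Icc.1 hj).1
        (Finset.mem_Icc.1 hj).2).abs
  obtain ⟨M, hM⟩ := hK.exists_bound_of_continuousOn hcont
  refine ⟨max M 1, by positivity, fun x hx i h₁ h₂ => ?_⟩
  calc ∑ j ∈ Finset.Icc 1 n, |A x i j|
      ≤ ∑ i ∈ Finset.Icc 1 n, ∑ j ∈ Finset.Icc 1 n, |A x i j| :=
        Finset.single_le_sum (f := fun i => ∑ j ∈ Finset.Icc 1 n, |A x i j|)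
          (fun _ _ => Finset.sum_nonneg fun _ _ => abs_nonneg _) (Finset.mem_Icc.2 ⟨h₁, h₂⟩)
    _ ≤ M := (le_abs_self _).trans (hM x hx)
    _ ≤ max M 1 := le_max_left _ _

theorem sum_mul_le_sum_mul_min_of_nonpos_off {ι : Type*} {s : Finset ι} {i : ι} (hi : i ∈ s)
    {a v : ι → ℝ} {m : ℝ} (ha : ∀ j ∈ s, j ≠ i → a j ≤ 0) (hv : ∀ j ∈ s, m ≤ v j)
    (hvi : v i = m) : ∑ j ∈ s, a j * v j ≤ (∑ j ∈ s, a j) * m := by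
  have key : ∑ j ∈ s, a j * (v j - m) ≤ 0 := by
    refine Finset.sum_nonpos fun j hj => ?_
    rcases eq_or_ne j i with rfl | hji
    · simp [hvi]
    · exact mul_nonpos_of_nonpos_of_nonneg (ha j hj hji) (sub_nonneg.2 (hv j hj))
  simp only [mul_sub, Finset.sum_sub_distrib, ← Finset.sum_mul] at key
  linarith

theorem Bl_pos (α e x : ℝ) : 0 < Bl α e x := Real.exp_pos _

theorem Bl_antitone (α e : ℝ) : Antitone (Bl α e) := fun x y hxy => by
  unfold Bl
  gcongr

theorem contDiff_Bl (α e : ℝ) {k : WithTop ℕ∞} : ContDiff ℝ k (Bl α e) := by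
  unfold Bl
  fun_prop

theorem iteratedDeriv_two_Bl {α e : ℝ} (h : 0 ≤ α / e) :
    iteratedDeriv 2 (Bl α e) = fun x => α / e * Bl α e x := by
  have hexp : Bl α e = fun x => Real.exp (-Real.sqrt (α / e) * x) := by
    funext x
    rw [Bl, neg_mul, neg_mul, mul_comm]
  rw [hexp, iteratedDeriv_exp_const_mul, neg_sq, Real.sq_sqrt h]

section Lop

variable {n : ℕ} {ε : ℕ → ℝ} {A : ℝ → ℕ → ℕ → ℝ}

theorem nonneg_of_Lop_nonneg
    (hAoff : ∀ x ∈ Icc (0:ℝ) 1, ∀ i j, 1 ≤ i → i ≤ n → 1 ≤ j → j ≤ n → i ≠ j → A x i j ≤ 0)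
    (hrow : ∀ x ∈ Icc (0:ℝ) 1, ∀ i, 1 ≤ i → i ≤ n → 0 < ∑ j ∈ Finset.Icc 1 n, A x i j)
    (hε : ∀ i, 1 ≤ i → i ≤ n → 0 ≤ ε i) {ψ : ℝ → ℕ → ℝ}
    (hψ : ∀ i, 1 ≤ i → i ≤ n → ContinuousOn (fun t => ψ t i) (Icc 0 1))
    (hL : ∀ y ∈ Ioo (0:ℝ) 1, ∀ i, 1 ≤ i → i ≤ n → 0 ≤ Lop n ε A ψ y i)
    (h₀ : ∀ i, 1 ≤ i → i ≤ n → 0 ≤ ψ 0 i) (h₁ : ∀ i, 1 ≤ i → i ≤ n → 0 ≤ ψ 1 i) :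
    ∀ y ∈ Icc (0:ℝ) 1, ∀ i, 1 ≤ i → i ≤ n → 0 ≤ ψ y i := by
  by_contra! hneg
  obtain ⟨y₀, hy₀, i₀, hi₀, hi₀n, hψ₀⟩ := hneg
  obtain ⟨z, hz, i, hi, hmin⟩ := isCompact_Icc.exists_isMinOn_finset (nonempty_Icc.2 zero_le_one)
    ⟨i₀, Finset.mem_Icc.2 ⟨hi₀, hi₀n⟩⟩ (f := ψ)
    fun i hi => hψ i (Finset.mem_Icc.1 hi).1 (Finset.mem_Icc.1 hi).2
  obtain ⟨hi1, hin⟩ := Finset.mem_Icc.1 hi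
  have hm : ψ z i < 0 := (hmin y₀ hy₀ i₀ (Finset.mem_Icc.2 ⟨hi₀, hi₀n⟩)).trans_lt hψ₀
  have hz' : z ∈ Ioo 0 1 := by
    refine ⟨hz.1.lt_of_ne ?_, hz.2.lt_of_ne ?_⟩ <;> rintro rfl
    exacts [(h₀ i hi1 hin).not_gt hm, (h₁ i hi1 hin).not_gt hm]
  have hloc : IsLocalMin (fun t => ψ t i) z :=
    IsMinOn.isLocalMin (fun y hy => hmin y hy i hi) (Icc_mem_nhds hz'.1 hz'.2)
  have hconv : 0 ≤ iteratedDeriv 2 (fun t => ψ t i) z := by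
    rw [iteratedDeriv_two_eq_deriv_deriv]
    exact hloc.deriv_deriv_nonneg ((hψ i hi1 hin).continuousAt (Icc_mem_nhds hz'.1 hz'.2))
  have hsum : ∑ j ∈ Finset.Icc 1 n, A z i j * ψ z j ≤ (∑ j ∈ Finset.Icc 1 n, A z i j) * ψ z i :=
    sum_mul_le_sum_mul_min_of_nonpos_off hi
      (fun j hj hji => hAoff z hz i j hi1 hin (Finset.mem_Icc.1 hj).1 (Finset.mem_Icc.1 hj).2
        (Ne.symm hji))
      (fun j hj => hmin z hz j hj) rfl
  have hLz := hL z hz' i hi1 hin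
  unfold Lop at hLz
  linarith [mul_nonneg (hε i hi1 hin) hconv, mul_neg_of_pos_of_neg (hrow z hz i hi1 hin) hm]

theorem Lop_sub {ψ χ : ℝ → ℕ → ℝ} {y : ℝ} {i : ℕ} (hψ : ContDiffAt ℝ 2 (fun t => ψ t i) y)
    (hχ : ContDiffAt ℝ 2 (fun t => χ t i) y) :
    Lop n ε A (ψ - χ) y i = Lop n ε A ψ y i - Lop n ε A χ y i := by
  simp only [Lop, Pi.sub_apply, iteratedDeriv_fun_sub hψ hχ, mul_sub, Finset.sum_sub_distrib]
  ring

theorem Lop_const_mul_Bl {α e κ y : ℝ} {i : ℕ} (h : 0 ≤ α / e) :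
    Lop n ε A (fun t _ => κ * Bl α e t) y i
      = κ * Bl α e y * (∑ j ∈ Finset.Icc 1 n, A y i j - ε i * (α / e)) := by
  simp only [Lop, iteratedDeriv_const_mul_field, iteratedDeriv_two_Bl h, ← Finset.sum_mul]
  ring

theorem Lop_neg {ψ : ℝ → ℕ → ℝ} {y : ℝ} {i : ℕ} :
    Lop n ε A (-ψ) y i = -Lop n ε A ψ y i := by
  simp only [Lop, Pi.neg_apply, iteratedDeriv_fun_neg, mul_neg, Finset.sum_neg_distrib]
  ring

theorem Lop_const_mul_Bl_nonneg {α e κ y : ℝ} {i : ℕ} (hα₀ : 0 < α)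
    (hα : α < ∑ j ∈ Finset.Icc 1 n, A y i j) (he : 0 < e) (hεe : ε i ≤ e) (hκ : 0 ≤ κ) :
    0 ≤ Lop n ε A (fun t _ => κ * Bl α e t) y i := by
  rw [Lop_const_mul_Bl (by positivity)]
  have : ε i * (α / e) ≤ α := by
    rw [mul_div_assoc', div_le_iff₀ he, mul_comm]
    exact mul_le_mul_of_nonneg_left hεe hα₀.le
  exact mul_nonneg (mul_nonneg hκ (Bl_pos _ _ _).le) (by linarith)

theorem le_mul_Bl_of_Lop_eq_zero {α e κ : ℝ}
    (hAoff : ∀ x ∈ Icc (0:ℝ) 1, ∀ i j, 1 ≤ i → i ≤ n → 1 ≤ j → j ≤ n → i ≠ j → A x i j ≤ 0)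
    (hα₀ : 0 < α)
    (hα : ∀ x ∈ Icc (0:ℝ) 1, ∀ i, 1 ≤ i → i ≤ n → α < ∑ j ∈ Finset.Icc 1 n, A x i j)
    (hε : ∀ i, 1 ≤ i → i ≤ n → 0 ≤ ε i) (he : 0 < e) (hεe : ∀ i, 1 ≤ i → i ≤ n → ε i ≤ e)
    (hκ : 0 ≤ κ) {w : ℝ → ℕ → ℝ} (hw : ∀ i, 1 ≤ i → i ≤ n → ContDiff ℝ 2 (fun t => w t i))
    (hLw : ∀ y ∈ Ioo (0:ℝ) 1, ∀ i, 1 ≤ i → i ≤ n → Lop n ε A w y i = 0)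
    (hw₁ : ∀ i, 1 ≤ i → i ≤ n → w 1 i = 0) (hw₀ : ∀ i, 1 ≤ i → i ≤ n → w 0 i ≤ κ) :
    ∀ y ∈ Icc (0:ℝ) 1, ∀ i, 1 ≤ i → i ≤ n → w y i ≤ κ * Bl α e y := by
  have hφ : ContDiff ℝ 2 (fun t => κ * Bl α e t) := contDiff_const.mul (contDiff_Bl α e)
  have key := nonneg_of_Lop_nonneg hAoff (fun x hx i h₁ h₂ => hα₀.trans (hα x hx i h₁ h₂)) hε
    (ψ := (fun t _ => κ * Bl α e t) - w)
    (fun i h₁ h₂ => (hφ.sub (hw i h₁ h₂)).continuous.continuousOn)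
    (fun y hy i h₁ h₂ => by
      rw [Lop_sub hφ.contDiffAt (hw i h₁ h₂).contDiffAt, hLw y hy i h₁ h₂, sub_zero]
      exact Lop_const_mul_Bl_nonneg hα₀ (hα y (Ioo_subset_Icc_self hy) i h₁ h₂) he
        (hεe i h₁ h₂) hκ)
    (fun i h₁ h₂ => by simpa [Bl] using hw₀ i h₁ h₂)
    (fun i h₁ h₂ => by simpa [hw₁ i h₁ h₂] using mul_nonneg hκ (Bl_pos α e 1).le)
  exact fun y hy i h₁ h₂ => sub_nonneg.1 (key y hy i h₁ h₂)

theorem abs_le_mul_Bl_of_Lop_eq_zero {α e κ : ℝ}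
    (hAoff : ∀ x ∈ Icc (0:ℝ) 1, ∀ i j, 1 ≤ i → i ≤ n → 1 ≤ j → j ≤ n → i ≠ j → A x i j ≤ 0)
    (hα₀ : 0 < α)
    (hα : ∀ x ∈ Icc (0:ℝ) 1, ∀ i, 1 ≤ i → i ≤ n → α < ∑ j ∈ Finset.Icc 1 n, A x i j)
    (hε : ∀ i, 1 ≤ i → i ≤ n → 0 ≤ ε i) (he : 0 < e) (hεe : ∀ i, 1 ≤ i → i ≤ n → ε i ≤ e)
    (hκ : 0 ≤ κ) {w : ℝ → ℕ → ℝ} (hw : ∀ i, 1 ≤ i → i ≤ n → ContDiff ℝ 2 (fun t => w t i))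
    (hLw : ∀ y ∈ Ioo (0:ℝ) 1, ∀ i, 1 ≤ i → i ≤ n → Lop n ε A w y i = 0)
    (hw₁ : ∀ i, 1 ≤ i → i ≤ n → w 1 i = 0) (hw₀ : ∀ i, 1 ≤ i → i ≤ n → |w 0 i| ≤ κ) :
    ∀ y ∈ Icc (0:ℝ) 1, ∀ i, 1 ≤ i → i ≤ n → |w y i| ≤ κ * Bl α e y := by
  intro y hy i h₁ h₂
  refine abs_le'.2 ⟨le_mul_Bl_of_Lop_eq_zero hAoff hα₀ hα hε he hεe hκ hw hLw hw₁
    (fun k h₁ h₂ => (le_abs_self _).trans (hw₀ k h₁ h₂)) y hy i h₁ h₂, ?_⟩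
  refine le_mul_Bl_of_Lop_eq_zero hAoff hα₀ hα hε he hεe hκ (w := -w)
    (fun k h₁ h₂ => (hw k h₁ h₂).neg)
    (fun y hy k h₁ h₂ => by rw [Lop_neg, hLw y hy k h₁ h₂, neg_zero])
    (fun k h₁ h₂ => by simp [hw₁ k h₁ h₂])
    (fun k h₁ h₂ => (neg_le_abs _).trans (hw₀ k h₁ h₂)) y hy i h₁ h₂

theorem mul_abs_iteratedDeriv_two_le_of_Lop_eq_zero {w : ℝ → ℕ → ℝ} {y B : ℝ} {i : ℕ}
    (hε : 0 ≤ ε i) (hL : Lop n ε A w y i = 0) (hw : ∀ j ∈ Finset.Icc 1 n, |w y j| ≤ B) :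
    ε i * |iteratedDeriv 2 (fun t => w t i) y| ≤ (∑ j ∈ Finset.Icc 1 n, |A y i j|) * B := by
  have heq :
      ε i * iteratedDeriv 2 (fun t => w t i) y = ∑ j ∈ Finset.Icc 1 n, A y i j * w y j := by
    unfold Lop at hL
    linarith
  rw [← abs_of_nonneg hε, ← abs_mul, heq, Finset.sum_mul]
  refine (Finset.abs_sum_le_sum_abs _ _).trans (Finset.sum_le_sum fun j hj => ?_)
  rw [abs_mul]
  exact mul_le_mul_of_nonneg_left (hw j hj) (abs_nonneg _)

end Lop

theorem stmt16_general
    (n : ℕ)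
    (A : ℝ → ℕ → ℕ → ℝ)
    (hAc : ∀ i j, 1 ≤ i → i ≤ n → 1 ≤ j → j ≤ n →
      ContinuousOn (fun x => A x i j) (Set.Icc 0 1))
    (hAoff : ∀ x ∈ Set.Icc (0:ℝ) 1, ∀ i j, 1 ≤ i → i ≤ n → 1 ≤ j → j ≤ n → i ≠ j → A x i j ≤ 0)
    (α : ℝ) (hα0 : 0 < α)
    (hα : ∀ x ∈ Set.Icc (0:ℝ) 1, ∀ i, 1 ≤ i → i ≤ n → α < ∑ j ∈ Finset.Icc 1 n, A x i j)
    (κ : ℝ) (hκ : 0 < κ) :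
    ∃ C > 0,
      ∀ ε : ℕ → ℝ,
      (∀ i, 1 ≤ i → i ≤ n → 0 < ε i) →
      (∀ i, 1 ≤ i → i ≤ n → ε i ≤ 1) →
      (∀ i j, 1 ≤ i → i < j → j ≤ n → ε i < ε j) →
      (∀ i, 1 ≤ i → i ≤ n → Real.sqrt (ε i) ≤ Real.sqrt α / 4) →
      ∀ w : ℝ → ℕ → ℝ,
      (∀ i, 1 ≤ i → i ≤ n → ContDiff ℝ 3 (fun t => w t i)) →
      (∀ y ∈ Set.Ioo (0:ℝ) 1, ∀ i, 1 ≤ i → i ≤ n → Lop n ε A w y i = 0) →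
      (∀ i, 1 ≤ i → i ≤ n → w 1 i = 0) →
      (∀ i, 1 ≤ i → i ≤ n → |w 0 i| ≤ κ) →
      ∀ N : ℕ, ∀ x : ℕ → ℝ,
      x 0 = 0 → x N = 1 → (∀ j, j < N → x j < x (j+1)) →
      ∀ i, 1 ≤ i → i ≤ n → ∀ j, 1 ≤ j → j ≤ N - 1 →
        ε i * |d2f x (fun t => w t i) j - iteratedDeriv 2 (fun t => w t i) (x j)| ≤
          C * Bl α (ε n) (x (j-1)) := by
  obtain ⟨M, hM₀, hM⟩ := isCompact_Icc.exists_pos_bound_sum_abs hAc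
  refine ⟨3 * M * κ, by positivity, ?_⟩
  intro ε hε _ hεlt _ w hw hLw hw₁ hw₀ N x hx₀ hxN hx i hi₁ hin j hj₁ hjN
  have hεn : ∀ k, 1 ≤ k → k ≤ n → ε k ≤ ε n := fun k hk hkn =>
    hkn.eq_or_lt.elim (fun h => h ▸ le_rfl) fun h => (hεlt k n hk h le_rfl).le
  have hw₂ : ∀ k, 1 ≤ k → k ≤ n → ContDiff ℝ 2 (fun t => w t k) :=
    fun k h₁ h₂ => (hw k h₁ h₂).of_le (by norm_num)
  have hbarrier := abs_le_mul_Bl_of_Lop_eq_zero hAoff hα0 hα (fun k h₁ h₂ => (hε k h₁ h₂).le)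
    (hε n (hi₁.trans hin) le_rfl) hεn hκ.le hw₂ hLw hw₁ hw₀
  obtain ⟨h₀, h₁, h₂, h₃⟩ := mesh_bounds hx₀ hxN hx hj₁ hjN
  rw [mul_assoc, mul_assoc]
  refine mul_abs_d2f_sub_iteratedDeriv_two_le (hw₂ i hi₁ hin) h₁ h₂ (hε i hi₁ hin).le
    fun y hy => ?_
  have hy' : y ∈ Ioo (0:ℝ) 1 := ⟨h₀.trans_lt hy.1, hy.2.trans_le h₃⟩
  calc ε i * |iteratedDeriv 2 (fun t => w t i) y|
      ≤ (∑ k ∈ Finset.Icc 1 n, |A y i k|) * (κ * Bl α (ε n) y) :=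
        mul_abs_iteratedDeriv_two_le_of_Lop_eq_zero (hε i hi₁ hin).le (hLw y hy' i hi₁ hin)
          fun k hk => hbarrier y (Ioo_subset_Icc_self hy') k (Finset.mem_Icc.1 hk).1
            (Finset.mem_Icc.1 hk).2
    _ ≤ M * (κ * Bl α (ε n) (x (j - 1))) := by
        gcongr
        exacts [mul_nonneg hκ.le (Bl_pos _ _ _).le, hM y (Ioo_subset_Icc_self hy') i hi₁ hin,
          Bl_antitone _ _ hy.1.le]

theorem stmt16
    (n : ℕ) (hn : 1 ≤ n)
    (A : ℝ → ℕ → ℕ → ℝ)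
    (hAc : ∀ i j, 1 ≤ i → i ≤ n → 1 ≤ j → j ≤ n →
      ContinuousOn (fun x => A x i j) (Set.Icc 0 1))
    (hAsm : ∀ i j, 1 ≤ i → i ≤ n → 1 ≤ j → j ≤ n → ContDiff ℝ 1 (fun x => A x i j))
    (hAdiag : ∀ x ∈ Set.Icc (0:ℝ) 1, ∀ i, 1 ≤ i → i ≤ n →
      ∑ j ∈ (Finset.Icc 1 n).erase i, |A x i j| < A x i i)
    (hAoff : ∀ x ∈ Set.Icc (0:ℝ) 1, ∀ i j, 1 ≤ i → i ≤ n → 1 ≤ j → j ≤ n → i ≠ j → A x i j ≤ 0)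
    (α : ℝ) (hα0 : 0 < α)
    (hα : ∀ x ∈ Set.Icc (0:ℝ) 1, ∀ i, 1 ≤ i → i ≤ n → α < ∑ j ∈ Finset.Icc 1 n, A x i j)
    (κ : ℝ) (hκ : 0 < κ) :
    ∃ C > 0,
      ∀ ε : ℕ → ℝ,
      (∀ i, 1 ≤ i → i ≤ n → 0 < ε i) →
      (∀ i, 1 ≤ i → i ≤ n → ε i ≤ 1) →
      (∀ i j, 1 ≤ i → i < j → j ≤ n → ε i < ε j) →
      (∀ i, 1 ≤ i → i ≤ n → Real.sqrt (ε i) ≤ Real.sqrt α / 4) →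
      ∀ w : ℝ → ℕ → ℝ,
      (∀ i, 1 ≤ i → i ≤ n → ContDiff ℝ 3 (fun t => w t i)) →
      (∀ y ∈ Set.Ioo (0:ℝ) 1, ∀ i, 1 ≤ i → i ≤ n → Lop n ε A w y i = 0) →
      (∀ i, 1 ≤ i → i ≤ n → w 1 i = 0) →
      (∀ i, 1 ≤ i → i ≤ n → |w 0 i| ≤ κ) →
      ∀ N : ℕ, ∀ x : ℕ → ℝ,
      x 0 = 0 → x N = 1 → (∀ j, j < N → x j < x (j+1)) →
      ∀ i, 1 ≤ i → i ≤ n → ∀ j, 1 ≤ j → j ≤ N - 1 →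
        ε i * |d2f x (fun t => w t i) j - iteratedDeriv 2 (fun t => w t i) (x j)| ≤
          C * Bl α (ε n) (x (j-1)) :=
  stmt16_general n A hAc hAoff α hα0 hα κ hκ
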